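/- arXiv:1505.00362 — 2 statements merged into one kernel-verified Lean document; each statement's English description precedes it below -/
import Mathlib

section
/- Let M₁, M₂ : X → 2^{X*} with M₂ monotone, let (x_n*) be a bounded sequence in X*, (γ_n) a bounded sequence in ]0,∞[, and suppose there exists z ∈ dom M₁ ∩ dom M₂ with lim_{‖x‖→∞} inf ⟨x - z, M₁x⟩/‖x‖ = +∞. If for every n, x_n ∈ (M₁ + γ_n M₂)⁻¹ x_n*, then the sequence (x_n) is bounded. -/
open NormedSpace

/-- A set-valued operator is monotone. -/
def IsMonotoneOp {X : Type*} [NormedAddCommGroup X] [NormedSpace ℝ X]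
    (A : X → Set (StrongDual ℝ X)) : Prop :=
  ∀ x₁ x₂ x₁s x₂s, x₁s ∈ A x₁ → x₂s ∈ A x₂ → 0 ≤ (x₁s - x₂s) (x₁ - x₂)

/-- if `M₂` is monotone, `(xₙ*)` is bounded in `X*`, `(γₙ)` is bounded in
`]0,∞[`, there is `z ∈ dom M₁ ∩ dom M₂` with `inf ⟨x-z,M₁x⟩/‖x‖ → +∞`, and
`xₙ ∈ (M₁ + γₙM₂)⁻¹xₙ*` for all `n`, then `(xₙ)` is bounded. -/
theorem bounded_of_resolvent_type
    (X : Type*) [NormedAddCommGroup X] [NormedSpace ℝ X] [CompleteSpace X] [Nontrivial X]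
    (hX : Function.Surjective (NormedSpace.inclusionInDoubleDual ℝ X))
    (M₁ M₂ : X → Set (StrongDual ℝ X))
    (hM₂ : IsMonotoneOp M₂)
    (xs : ℕ → StrongDual ℝ X) (hxs : ∃ β : ℝ, ∀ n, ‖xs n‖ ≤ β)
    (γ : ℕ → ℝ) (hγpos : ∀ n, 0 < γ n) (hγbd : ∃ σ : ℝ, ∀ n, γ n ≤ σ)
    (z : X) (hz₁ : (M₁ z).Nonempty) (hz₂ : (M₂ z).Nonempty)
    (hcoer : ∀ K : ℝ, ∃ R : ℝ, ∀ x, R ≤ ‖x‖ → ∀ us ∈ M₁ x, K ≤ us (x - z) / ‖x‖)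
    (x : ℕ → X)
    (hx : ∀ n, ∃ as ∈ M₁ (x n), ∃ bs ∈ M₂ (x n), xs n = as + γ n • bs) :
    ∃ C : ℝ, ∀ n, ‖x n‖ ≤ C := by
  obtain ⟨β, hβ⟩ := hxs
  obtain ⟨σ, hσ⟩ := hγbd
  obtain ⟨w, hw⟩ := hz₂
  have hβ0 : 0 ≤ β := le_trans (norm_nonneg _) (hβ 0)
  have hσ0 : 0 ≤ σ := le_trans (hγpos 0).le (hσ 0)
  set B : ℝ := β + σ * ‖w‖ with hBdef
  have hB0 : 0 ≤ B := by positivity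
  obtain ⟨R, hR⟩ := hcoer (B * (1 + ‖z‖) + 1)
  refine ⟨max R 1, fun n => ?_⟩
  by_contra hcon
  push_neg at hcon
  have hRn : R ≤ ‖x n‖ := le_of_lt (lt_of_le_of_lt (le_max_left _ _) hcon)
  have h1n : 1 ≤ ‖x n‖ := le_of_lt (lt_of_le_of_lt (le_max_right _ _) hcon)
  have hpos : 0 < ‖x n‖ := lt_of_lt_of_le one_pos h1n
  obtain ⟨as, has, bs, hbs, heq⟩ := hx n
  have hKey : B * (1 + ‖z‖) + 1 ≤ as (x n - z) / ‖x n‖ := hR (x n) hRn as has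
  -- monotonicity
  have hmono : 0 ≤ bs (x n - z) - w (x n - z) := by
    have := hM₂ (x n) z bs w hbs hw
    simpa using this
  -- as = xs n - γ n • bs
  have hval : as (x n - z) = xs n (x n - z) - γ n * bs (x n - z) := by
    have : as (x n - z) = (xs n) (x n - z) - (γ n • bs) (x n - z) := by
      rw [heq]; simp
    simpa [ContinuousLinearMap.smul_apply, smul_eq_mul] using this
  have hxsb : xs n (x n - z) ≤ β * ‖x n - z‖ := by
    calc xs n (x n - z) ≤ ‖xs n (x n - z)‖ := le_abs_self _
      _ ≤ ‖xs n‖ * ‖x n - z‖ := ContinuousLinearMap.le_opNorm _ _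
      _ ≤ β * ‖x n - z‖ := by
          exact mul_le_mul_of_nonneg_right (hβ n) (norm_nonneg _)
  have hwb : -(‖w‖ * ‖x n - z‖) ≤ w (x n - z) := by
    have h1 : ‖w (x n - z)‖ ≤ ‖w‖ * ‖x n - z‖ := ContinuousLinearMap.le_opNorm _ _
    rw [Real.norm_eq_abs] at h1
    linarith [(abs_le.mp h1).1]
  -- γ n * bs (x n - z) ≥ -σ * ‖w‖ * ‖x n - z‖
  have hγw : -(σ * ‖w‖ * ‖x n - z‖) ≤ γ n * bs (x n - z) := by
    have h2 : γ n * w (x n - z) ≤ γ n * bs (x n - z) :=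
      mul_le_mul_of_nonneg_left (by linarith) (hγpos n).le
    have h3 : -(γ n * (‖w‖ * ‖x n - z‖)) ≤ γ n * w (x n - z) := by
      have := mul_le_mul_of_nonneg_left hwb (hγpos n).le
      linarith [this]
    have h4 : γ n * (‖w‖ * ‖x n - z‖) ≤ σ * (‖w‖ * ‖x n - z‖) :=
      mul_le_mul_of_nonneg_right (hσ n) (by positivity)
    nlinarith
  have hup : as (x n - z) ≤ B * ‖x n - z‖ := by
    rw [hval, hBdef]; nlinarith
  have hnorm : ‖x n - z‖ ≤ (1 + ‖z‖) * ‖x n‖ := by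
    calc ‖x n - z‖ ≤ ‖x n‖ + ‖z‖ := norm_sub_le _ _
      _ ≤ ‖x n‖ + ‖z‖ * ‖x n‖ := by nlinarith [norm_nonneg z]
      _ = (1 + ‖z‖) * ‖x n‖ := by ring
  have hfinal : as (x n - z) / ‖x n‖ ≤ B * (1 + ‖z‖) := by
    rw [div_le_iff₀ hpos]
    calc as (x n - z) ≤ B * ‖x n - z‖ := hup
      _ ≤ B * ((1 + ‖z‖) * ‖x n‖) := mul_le_mul_of_nonneg_left hnorm hB0
      _ = B * (1 + ‖z‖) * ‖x n‖ := by ring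
  linarith
end

section
/- Let h ∈ Γ₀(X) be essentially smooth with Gâteaux gradient ∇h on int dom h, and let M : X → 2^{X*} be monotone with dom M ∩ int dom h ≠ ∅. If h is supercoercive, then ∇h + M is coercive; if moreover M is maximally monotone, then ran(∇h + M) = X*. -/
open NormedSpace Set

/-- The Moreau subdifferential of `h : X → ]-∞,+∞]`. -/
def subdiff {X : Type*} [NormedAddCommGroup X] [NormedSpace ℝ X]
    (h : X → EReal) (x : X) : Set (StrongDual ℝ X) :=
  {xs | ∀ y, (xs (y - x) : EReal) + h x ≤ h y}

/-- A set-valued operator is maximally monotone. -/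
def IsMaxMonotoneOp {X : Type*} [NormedAddCommGroup X] [NormedSpace ℝ X]
    (A : X → Set (StrongDual ℝ X)) : Prop :=
  IsMonotoneOp A ∧ ∀ x xs, (∀ y ys, ys ∈ A y → 0 ≤ (xs - ys) (x - y)) → xs ∈ A x

/-- A set-valued operator `M : X → 2^{X*}` is coercive. -/
def IsCoerciveOp {X : Type*} [NormedAddCommGroup X] [NormedSpace ℝ X]
    (M : X → Set (StrongDual ℝ X)) : Prop :=
  ∃ z, (M z).Nonempty ∧
    ∀ K : ℝ, ∃ R : ℝ, ∀ x, R ≤ ‖x‖ → ∀ xs ∈ M x, K ≤ xs (x - z) / ‖x‖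

lemma exists_bound_near {X : Type*} [NormedAddCommGroup X] [NormedSpace ℝ X] [CompleteSpace X]
    (h : X → EReal) (hbot : ∀ x, h x ≠ ⊥) (hlsc : LowerSemicontinuous h)
    (hconv : ∀ x y : X, ∀ a b : ℝ, 0 ≤ a → 0 ≤ b → a + b = 1 →
      h (a • x + b • y) ≤ (a : EReal) * h x + (b : EReal) * h y)
    (z : X) (hz : z ∈ interior {y | h y ≠ ⊤}) :
    ∃ ε > 0, ∃ C : ℝ, ∀ x, dist x z < ε → h x ≤ (C : EReal) := by
  obtain ⟨δ₀, hδ₀, hball⟩ := Metric.isOpen_iff.1 isOpen_interior z hz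
  set δ := δ₀ / 2 with hδdef
  have hδ : 0 < δ := by positivity
  have hcb : Metric.closedBall z δ ⊆ {y | h y ≠ ⊤} := by
    intro x hx
    exact interior_subset (hball (lt_of_le_of_lt (Metric.mem_closedBall.1 hx) (by
      simp only [hδdef]; linarith)))
  -- Baire category on the closed ball
  haveI : Nonempty (Metric.closedBall z δ) := ⟨⟨z, Metric.mem_closedBall_self hδ.le⟩⟩
  haveI : CompleteSpace (Metric.closedBall z δ) :=
    (Metric.isClosed_closedBall.isComplete).completeSpace_coe
  obtain ⟨n, x₁, hx₁⟩ := nonempty_interior_of_iUnion_of_closed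
    (X := Metric.closedBall z δ) (f := fun n : ℕ => {x | h ↑x ≤ ((n : ℝ) : EReal)})
    (fun n => (hlsc.isClosed_preimage _).preimage continuous_subtype_val)
    (by
      ext x
      simp only [mem_iUnion, mem_univ, iff_true, mem_setOf_eq]
      have hxD : h ↑x ≠ ⊤ := hcb x.2
      obtain ⟨n, hn⟩ := exists_nat_ge (h ↑x).toReal
      exact ⟨n, by rw [← EReal.coe_toReal hxD (hbot _)]; exact_mod_cast hn⟩)
  -- extract a relative metric ball
  rw [mem_interior_iff_mem_nhds, Metric.mem_nhds_iff] at hx₁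
  obtain ⟨ε₁, hε₁, hsub⟩ := hx₁
  have hrel : ∀ y : X, y ∈ Metric.closedBall z δ → dist y ↑x₁ < ε₁ → h y ≤ ((n : ℝ) : EReal) := by
    intro y hy hdy
    have : (⟨y, hy⟩ : Metric.closedBall z δ) ∈ Metric.ball x₁ ε₁ := by
      rw [Metric.mem_ball, Subtype.dist_eq]; exact hdy
    exact hsub this
  -- shrink to an ambient ball
  set ε' := min ε₁ δ with hε'def
  have hε' : 0 < ε' := lt_min hε₁ hδ
  set θ := ε' / (4 * δ) with hθdef
  have hθpos : 0 < θ := by positivity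
  have hθle : θ ≤ 1 / 4 := by
    rw [hθdef, div_le_div_iff₀ (by positivity) (by norm_num)]
    have : ε' ≤ δ := min_le_right _ _
    nlinarith
  set x₂ := z + (1 - θ) • ((x₁ : X) - z) with hx₂def
  have hnx : ‖(x₁ : X) - z‖ ≤ δ := by
    rw [← dist_eq_norm]; exact Metric.mem_closedBall.1 x₁.2
  have hx₂z : ‖x₂ - z‖ ≤ δ := by
    rw [hx₂def]
    simp only [add_sub_cancel_left]
    rw [norm_smul, Real.norm_eq_abs, abs_of_nonneg (by linarith)]
    nlinarith
  have hθδ : θ * δ = ε' / 4 := by rw [hθdef]; field_simp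
  have hbound : ∀ y, dist y x₂ < ε' / 4 → h y ≤ ((n : ℝ) : EReal) := by
    intro y hy
    rw [dist_eq_norm] at hy
    have h1 : dist y z ≤ δ := by
      have heq : y - z = (y - x₂) + (1 - θ) • ((x₁ : X) - z) := by rw [hx₂def]; abel
      rw [dist_eq_norm, heq]
      calc ‖(y - x₂) + (1 - θ) • ((x₁ : X) - z)‖
          ≤ ‖y - x₂‖ + ‖(1 - θ) • ((x₁ : X) - z)‖ := norm_add_le _ _
        _ ≤ ε' / 4 + (1 - θ) * δ := by
            rw [norm_smul, Real.norm_eq_abs, abs_of_nonneg (by linarith)]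
            have : (1 - θ) * ‖(x₁ : X) - z‖ ≤ (1 - θ) * δ := by
              apply mul_le_mul_of_nonneg_left hnx (by linarith)
            linarith
        _ ≤ δ := by nlinarith
    have h2 : dist y ↑x₁ < ε₁ := by
      have heq : y - (x₁ : X) = (y - x₂) + (x₂ - (x₁ : X)) := by abel
      have h3 : x₂ - (x₁ : X) = -(θ • ((x₁ : X) - z)) := by
        rw [hx₂def, sub_smul, one_smul]; abel
      have h4 : ‖x₂ - (x₁ : X)‖ ≤ ε' / 4 := by
        rw [h3, norm_neg, norm_smul, Real.norm_eq_abs, abs_of_nonneg hθpos.le, ← hθδ]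
        exact mul_le_mul_of_nonneg_left hnx hθpos.le
      rw [dist_eq_norm, heq]
      calc ‖(y - x₂) + (x₂ - (x₁ : X))‖ ≤ ‖y - x₂‖ + ‖x₂ - (x₁ : X)‖ := norm_add_le _ _
        _ < ε' / 4 + ε' / 4 := by linarith
        _ ≤ ε₁ := by
            have : ε' ≤ ε₁ := min_le_left _ _
            linarith
    exact hrel y (Metric.mem_closedBall.2 h1) h2
  -- spread to the center z
  set w := z + (1/2 : ℝ) • (z - x₂) with hwdef
  have hwB : w ∈ Metric.closedBall z δ := by
    rw [Metric.mem_closedBall, dist_eq_norm, hwdef]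
    simp only [add_sub_cancel_left]
    rw [norm_smul, Real.norm_eq_abs]
    rw [abs_of_nonneg (by norm_num : (0:ℝ) ≤ 1/2)]
    have : ‖z - x₂‖ = ‖x₂ - z‖ := norm_sub_rev _ _
    rw [this]; linarith
  have hw : h w ≠ ⊤ := hcb hwB
  refine ⟨ε' / 4 / 3, by positivity, (1/3) * n + (2/3) * (h w).toReal, fun y hy => ?_⟩
  set x' := (3 : ℝ) • (y - z) + x₂ with hx'def
  have hx'B : dist x' x₂ < ε' / 4 := by
    rw [dist_eq_norm, hx'def]
    simp only [add_sub_cancel_right]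
    rw [norm_smul, Real.norm_eq_abs]
    rw [dist_eq_norm] at hy
    rw [abs_of_nonneg (by norm_num : (0:ℝ) ≤ 3)]
    linarith
  have hx'n : h x' ≤ ((n : ℝ) : EReal) := hbound x' hx'B
  have hx'top : h x' ≠ ⊤ := (lt_of_le_of_lt hx'n (EReal.coe_lt_top n)).ne
  have hx're : h x' = (((h x').toReal : ℝ) : EReal) := (EReal.coe_toReal hx'top (hbot _)).symm
  have hwre : h w = (((h w).toReal : ℝ) : EReal) := (EReal.coe_toReal hw (hbot _)).symm
  have hcomb : y = (1/3 : ℝ) • x' + (2/3 : ℝ) • w := by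
    rw [hx'def, hwdef]; module
  have hc := hconv x' w (1/3) (2/3) (by norm_num) (by norm_num) (by norm_num)
  rw [← hcomb] at hc
  refine le_trans hc ?_
  rw [hx're, hwre, ← EReal.coe_mul, ← EReal.coe_mul, ← EReal.coe_add, EReal.coe_le_coe_iff]
  have : (h x').toReal ≤ n := by rw [hx're] at hx'n; exact_mod_cast hx'n
  simp only [EReal.toReal_coe]
  nlinarith

lemma fm_point {X : Type*} [NormedAddCommGroup X] [NormedSpace ℝ X]
    (h : X → EReal) (hbot : ∀ x, h x ≠ ⊥) (hlsc : LowerSemicontinuous h)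
    (hconv : ∀ x y : X, ∀ a b : ℝ, 0 ≤ a → 0 ≤ b → a + b = 1 →
      h (a • x + b • y) ≤ (a : EReal) * h x + (b : EReal) * h y)
    (z : X) (hz : h z ≠ ⊤)
    (g₀ : X →L[ℝ] ℝ) (hg₀ : ∀ x, h x ≠ ⊤ → (h z).toReal + g₀ (x - z) ≤ (h x).toReal)
    (x₀ : X) (C' : ℝ)
    (hyp : ∀ (v : X →L[ℝ] ℝ) (B : ℝ), (∀ x, h x ≠ ⊤ → v x - (h x).toReal ≤ B) →
      v x₀ - C' ≤ B) :
    h x₀ ≤ (C' : EReal) := by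
  by_contra hlt
  have hmem : ∀ x : X, h x ≠ ⊤ → ∀ t : ℝ, (h x).toReal ≤ t →
      (x, t) ∈ {p : X × ℝ | h p.1 ≤ ((p.2 : ℝ) : EReal)} := by
    intro x hx t ht
    simp only [mem_setOf_eq]
    rw [← EReal.coe_toReal hx (hbot x)]
    exact_mod_cast ht
  -- the epigraph is closed and convex
  have hclosed : IsClosed {p : X × ℝ | h p.1 ≤ ((p.2 : ℝ) : EReal)} := by
    have h1 : IsClosed {p : X × EReal | h p.1 ≤ p.2} :=
      (lowerSemicontinuous_iff_isClosed_epigraph).1 hlsc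
    have h2 : Continuous (fun p : X × ℝ => (p.1, (p.2 : EReal))) :=
      continuous_fst.prodMk (continuous_coe_real_ereal.comp continuous_snd)
    exact h1.preimage h2
  have hcvx : Convex ℝ {p : X × ℝ | h p.1 ≤ ((p.2 : ℝ) : EReal)} := by
    rintro ⟨p1, p2⟩ hp ⟨q1, q2⟩ hq a b ha hb hab
    simp only [mem_setOf_eq] at hp hq ⊢
    have hp1 : h p1 ≠ ⊤ := (lt_of_le_of_lt hp (EReal.coe_lt_top _)).ne
    have hq1 : h q1 ≠ ⊤ := (lt_of_le_of_lt hq (EReal.coe_lt_top _)).ne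
    have hpR : (h p1).toReal ≤ p2 := by
      rw [← EReal.coe_toReal hp1 (hbot _)] at hp; exact_mod_cast hp
    have hqR : (h q1).toReal ≤ q2 := by
      rw [← EReal.coe_toReal hq1 (hbot _)] at hq; exact_mod_cast hq
    calc h (a • p1 + b • q1) ≤ (a : EReal) * h p1 + (b : EReal) * h q1 :=
          hconv p1 q1 a b ha hb hab
      _ = (((a * (h p1).toReal + b * (h q1).toReal : ℝ)) : EReal) := by
          rw [← EReal.coe_toReal hp1 (hbot _), ← EReal.coe_toReal hq1 (hbot _)]
          simp only [EReal.toReal_coe, ← EReal.coe_mul, ← EReal.coe_add]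
      _ ≤ (((a • p2 + b • q2 : ℝ)) : EReal) := by
          rw [EReal.coe_le_coe_iff]
          simp only [smul_eq_mul]
          have := mul_le_mul_of_nonneg_left hpR ha
          have := mul_le_mul_of_nonneg_left hqR hb
          linarith
  have hnot : (x₀, C') ∉ {p : X × ℝ | h p.1 ≤ ((p.2 : ℝ) : EReal)} := hlt
  obtain ⟨f, u, hfu, hux⟩ := geometric_hahn_banach_closed_point hcvx hclosed hnot
  set w₀ : X →L[ℝ] ℝ := f.comp (ContinuousLinearMap.inl ℝ X ℝ) with hw₀def
  set γ : ℝ := f (0, 1) with hγdef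
  have hdecomp : ∀ p : X × ℝ, f p = w₀ p.1 + p.2 * γ := by
    rintro ⟨p1, p2⟩
    have : (p1, p2) = (p1, (0:ℝ)) + p2 • ((0:X), (1:ℝ)) := by
      simp [Prod.ext_iff]
    conv_lhs => rw [this]
    rw [map_add, map_smul]
    simp only [hw₀def, hγdef, ContinuousLinearMap.comp_apply, ContinuousLinearMap.inl_apply,
      smul_eq_mul]
  have hzR : (h z).toReal ≤ (h z).toReal := le_refl _
  -- γ ≤ 0
  have hγle : γ ≤ 0 := by
    by_contra hγpos
    push_neg at hγpos
    obtain ⟨n, hn⟩ := exists_nat_gt ((u - w₀ z - (h z).toReal * γ) / γ)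
    have hmem' := hfu _ (hmem z hz ((h z).toReal + n) (by linarith [Nat.cast_nonneg (α := ℝ) n]))
    rw [hdecomp] at hmem'
    simp only at hmem'
    rw [div_lt_iff₀ hγpos] at hn
    nlinarith
  rcases lt_or_eq_of_le hγle with hγneg | hγzero
  · -- γ < 0
    set c : ℝ := (-γ)⁻¹ with hcdef
    have hcpos : 0 < c := by rw [hcdef]; exact inv_pos.2 (neg_pos.2 hγneg)
    have hcγ : c * γ = -1 := by
      rw [hcdef]
      field_simp
      rw [div_self hγneg.ne]
    set v₀ : X →L[ℝ] ℝ := c • w₀ with hv₀def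
    have hB : ∀ x, h x ≠ ⊤ → v₀ x - (h x).toReal ≤ c * u := by
      intro x hx
      have := hfu _ (hmem x hx ((h x).toReal) (le_refl _))
      rw [hdecomp] at this
      simp only at this
      have h2 : c * (w₀ x + (h x).toReal * γ) ≤ c * u :=
        mul_le_mul_of_nonneg_left this.le hcpos.le
      have e1 : c * (w₀ x + (h x).toReal * γ) = c * w₀ x + (h x).toReal * (c * γ) := by ring
      rw [e1, hcγ] at h2
      simp only [hv₀def, ContinuousLinearMap.smul_apply, smul_eq_mul]
      linarith
    have := hyp v₀ (c * u) hB
    rw [hdecomp] at hux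
    simp only at hux
    have h2 : c * u < c * (w₀ x₀ + C' * γ) := mul_lt_mul_of_pos_left hux hcpos
    have e1 : c * (w₀ x₀ + C' * γ) = c * w₀ x₀ + C' * (c * γ) := by ring
    rw [e1, hcγ] at h2
    simp only [hv₀def, ContinuousLinearMap.smul_apply, smul_eq_mul] at this
    linarith
  · -- γ = 0
    have hu : ∀ x, h x ≠ ⊤ → w₀ x < u := by
      intro x hx
      have := hfu _ (hmem x hx ((h x).toReal) (le_refl _))
      rw [hdecomp] at this
      rw [hγzero] at this
      simpa using this
    have hux' : u < w₀ x₀ := by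
      rw [hdecomp, hγzero] at hux
      simpa using hux
    have key : ∀ s : ℝ, 0 < s → s * (w₀ x₀ - u) ≤ C' + g₀ z - (h z).toReal - g₀ x₀ := by
      intro s hs
      have hB : ∀ x, h x ≠ ⊤ → (g₀ + s • w₀) x - (h x).toReal ≤
          (g₀ z - (h z).toReal) + s * u := by
        intro x hx
        have h1 := hg₀ x hx
        have h2 := hu x hx
        simp only [ContinuousLinearMap.add_apply, ContinuousLinearMap.smul_apply, smul_eq_mul,
          map_sub] at h1 ⊢
        nlinarith
      have := hyp (g₀ + s • w₀) _ hB
      simp only [ContinuousLinearMap.add_apply, ContinuousLinearMap.smul_apply, smul_eq_mul] at this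
      nlinarith
    have hpos : 0 < w₀ x₀ - u := by linarith
    set c₂ := C' + g₀ z - (h z).toReal - g₀ x₀ with hc₂
    have := key ((|c₂| + 1) / (w₀ x₀ - u)) (by positivity)
    rw [div_mul_cancel₀ _ hpos.ne'] at this
    have := le_abs_self c₂
    linarith

set_option maxHeartbeats 1000000 in
/-- Let `h ∈ Γ₀(X)` be essentially smooth with Gâteaux gradient `∇h` on
`int dom h`, `M` monotone with `dom M ∩ int dom h ≠ ∅`.  If `h` is supercoercive then
`∇h + M` is coercive; if moreover `M` is maximally monotone, `ran(∇h + M) = X*`. -/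
theorem gradient_plus_monotone_coercive
    (X : Type*) [NormedAddCommGroup X] [NormedSpace ℝ X] [CompleteSpace X] [Nontrivial X]
    (hX : Function.Surjective (NormedSpace.inclusionInDoubleDual ℝ X))
    (h : X → EReal)
    (hproper : (∀ x, h x ≠ ⊥) ∧ ∃ x, h x ≠ ⊤)
    (hlsc : LowerSemicontinuous h)
    (hconv : ∀ x y : X, ∀ a b : ℝ, 0 ≤ a → 0 ≤ b → a + b = 1 →
      h (a • x + b • y) ≤ (a : EReal) * h x + (b : EReal) * h y)
    (gradh : X → StrongDual ℝ X)
    -- essential smoothness: `dom ∂h = int dom h` and `∂h = {∇h}` there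
    (hdom : ∀ x, (subdiff h x).Nonempty ↔ x ∈ interior {y | h y ≠ ⊤})
    (hgrad : ∀ x ∈ interior {y | h y ≠ ⊤}, subdiff h x = {gradh x})
    (M : X → Set (StrongDual ℝ X)) (hM : IsMonotoneOp M)
    (hinter : ∃ x, (M x).Nonempty ∧ x ∈ interior {y | h y ≠ ⊤})
    -- supercoercivity of `h`
    (hsuper : ∀ K : ℝ, ∃ R : ℝ, ∀ x, R ≤ ‖x‖ → ((K * ‖x‖ : ℝ) : EReal) ≤ h x) :
    IsCoerciveOp (fun x => {s | x ∈ interior {y | h y ≠ ⊤} ∧ ∃ m ∈ M x, s = gradh x + m}) ∧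
    (IsMaxMonotoneOp M →
      ∀ xs : StrongDual ℝ X, ∃ x, x ∈ interior {y | h y ≠ ⊤} ∧ ∃ m ∈ M x, xs = gradh x + m) := by
  obtain ⟨hbot, -⟩ := hproper
  obtain ⟨z, ⟨m₀, hm₀⟩, hzS⟩ := hinter
  have hzD : h z ≠ ⊤ := interior_subset hzS
  have hre : ∀ x : X, h x ≠ ⊤ → h x = (((h x).toReal : ℝ) : EReal) :=
    fun x hx => (EReal.coe_toReal hx (hbot x)).symm
  have hgradmem : ∀ x, x ∈ interior {y | h y ≠ ⊤} → gradh x ∈ subdiff h x := by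
    intro x hx
    rw [hgrad x hx]
    rfl
  have hgsub : ∀ x, x ∈ interior {y | h y ≠ ⊤} → ∀ y, h y ≠ ⊤ →
      gradh x (y - x) + (h x).toReal ≤ (h y).toReal := by
    intro x hx y hy
    have h1 := hgradmem x hx y
    rw [hre x (interior_subset hx), hre y hy, ← EReal.coe_add] at h1
    exact_mod_cast h1
  have hsupR : ∀ K : ℝ, ∃ R, ∀ x : X, h x ≠ ⊤ → R ≤ ‖x‖ → K * ‖x‖ ≤ (h x).toReal := by
    intro K
    obtain ⟨R, hR⟩ := hsuper K
    refine ⟨R, fun x hx hRx => ?_⟩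
    have := hR x hRx
    rw [hre x hx] at this
    exact_mod_cast this
  constructor
  · -- PART 1 : coercivity
    refine ⟨z, ⟨gradh z + m₀, hzS, m₀, hm₀, rfl⟩, ?_⟩
    intro K
    obtain ⟨R₁, hR₁⟩ := hsupR (K + ‖m₀‖ + 1)
    refine ⟨max R₁ (max 1 ((h z).toReal + ‖m₀‖ * ‖z‖)), ?_⟩
    rintro x hRx s ⟨hxS, m, hm, rfl⟩
    have hx1 : (1:ℝ) ≤ ‖x‖ := le_trans (le_trans (le_max_left _ _) (le_max_right _ _)) hRx
    have hx0 : (0:ℝ) < ‖x‖ := by linarith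
    have hxD : h x ≠ ⊤ := interior_subset hxS
    have hsup : (K + ‖m₀‖ + 1) * ‖x‖ ≤ (h x).toReal := hR₁ x hxD (le_trans (le_max_left _ _) hRx)
    have hzx : (h z).toReal + ‖m₀‖ * ‖z‖ ≤ ‖x‖ :=
      le_trans (le_trans (le_max_right _ _) (le_max_right _ _)) hRx
    have hgx : (h x).toReal - (h z).toReal ≤ gradh x (x - z) := by
      have h1 := hgsub x hxS z hzD
      have hneg : gradh x (z - x) = - gradh x (x - z) := by
        rw [← map_neg]
        congr 1
        abel
      rw [hneg] at h1
      linarith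
    have hmono : m₀ (x - z) ≤ m (x - z) := by
      have := hM x z m m₀ hm hm₀
      simp only [ContinuousLinearMap.sub_apply] at this
      linarith
    have hm₀b : -(‖m₀‖ * (‖x‖ + ‖z‖)) ≤ m₀ (x - z) := by
      have h1 : |m₀ (x - z)| ≤ ‖m₀‖ * ‖x - z‖ := by
        rw [← Real.norm_eq_abs]
        exact m₀.le_opNorm _
      have h2 : ‖x - z‖ ≤ ‖x‖ + ‖z‖ := norm_sub_le _ _
      have h3 : ‖m₀‖ * ‖x - z‖ ≤ ‖m₀‖ * (‖x‖ + ‖z‖) :=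
        mul_le_mul_of_nonneg_left h2 (norm_nonneg _)
      have := abs_le.1 h1
      linarith
    rw [le_div_iff₀ hx0]
    simp only [ContinuousLinearMap.add_apply]
    nlinarith [hgx, hmono, hm₀b, hsup, hzx, norm_nonneg m₀, norm_nonneg z]
  · -- PART 2 : surjectivity
    intro hMm xs
    obtain ⟨ε, hε, Cb, hCb⟩ := exists_bound_near h hbot hlsc hconv z hzS
    have hCbR : ∀ x : X, dist x z < ε → h x ≠ ⊤ ∧ (h x).toReal ≤ Cb := by
      intro x hx
      have h1 := hCb x hx
      have h2 : h x ≠ ⊤ := (lt_of_le_of_lt h1 (EReal.coe_lt_top _)).ne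
      refine ⟨h2, ?_⟩
      rw [hre x h2] at h1
      exact_mod_cast h1
    -- the conjugate function
    set Hs : (StrongDual ℝ X) → ℝ := fun u => sSup ((fun x => u x - (h x).toReal) '' {y | h y ≠ ⊤})
      with hHsdef
    have hboundρ : ∀ ρ : ℝ, 0 ≤ ρ → ∃ C, ∀ u : StrongDual ℝ X, ‖u‖ ≤ ρ → ∀ x, h x ≠ ⊤ →
        u x - (h x).toReal ≤ C := by
      intro ρ hρ
      obtain ⟨R₀, hR₀⟩ := hsupR (ρ + 1)
      set R := max R₀ 0 with hRdef
      have hRnn : 0 ≤ R := le_max_right _ _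
      refine ⟨max 0 ((ρ + ‖gradh z‖) * R + (gradh z z - (h z).toReal + ‖gradh z‖ * ‖z‖)),
        fun u hu x hx => ?_⟩
      rcases le_or_gt ‖x‖ R with hc | hc
      · -- small x : use the affine minorant
        have hmin : gradh z (x - z) + (h z).toReal ≤ (h x).toReal := hgsub z hzS x hx
        have h1 : u x ≤ ρ * ‖x‖ := by
          calc u x ≤ |u x| := le_abs_self _
            _ ≤ ‖u‖ * ‖x‖ := by rw [← Real.norm_eq_abs]; exact u.le_opNorm _
            _ ≤ ρ * ‖x‖ := mul_le_mul_of_nonneg_right hu (norm_nonneg _)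
        have h2 : -(‖gradh z‖ * ‖x‖) ≤ gradh z x := by
          have ha : |gradh z x| ≤ ‖gradh z‖ * ‖x‖ := by
            rw [← Real.norm_eq_abs]; exact (gradh z).le_opNorm x
          linarith [(abs_le.1 ha).1]
        have h3 : gradh z (x - z) = gradh z x - gradh z z := by rw [map_sub]
        have h4 : ρ * ‖x‖ ≤ ρ * R := mul_le_mul_of_nonneg_left hc hρ
        have h5 : ‖gradh z‖ * ‖x‖ ≤ ‖gradh z‖ * R := mul_le_mul_of_nonneg_left hc (norm_nonneg _)
        refine le_trans ?_ (le_max_right _ _)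
        nlinarith [mul_nonneg (norm_nonneg (gradh z)) (norm_nonneg z), hmin, h1, h2, h3, h4, h5]
      · -- large x : supercoercivity
        have h6 : (ρ + 1) * ‖x‖ ≤ (h x).toReal := hR₀ x hx (le_trans (le_max_left _ _) hc.le)
        have h1 : u x ≤ ρ * ‖x‖ := by
          calc u x ≤ |u x| := le_abs_self _
            _ ≤ ‖u‖ * ‖x‖ := by rw [← Real.norm_eq_abs]; exact u.le_opNorm _
            _ ≤ ρ * ‖x‖ := mul_le_mul_of_nonneg_right hu (norm_nonneg _)
        refine le_trans ?_ (le_max_left _ _)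
        nlinarith [norm_nonneg x]
    have hSne : ∀ u : StrongDual ℝ X, ((fun x => u x - (h x).toReal) '' {y | h y ≠ ⊤}).Nonempty :=
      fun u => ⟨_, ⟨z, hzD, rfl⟩⟩
    have hSbdd : ∀ u : StrongDual ℝ X, BddAbove ((fun x => u x - (h x).toReal) '' {y | h y ≠ ⊤}) := by
      intro u
      obtain ⟨C, hC⟩ := hboundρ ‖u‖ (norm_nonneg u)
      exact ⟨C, by rintro r ⟨x, hx, rfl⟩; exact hC u le_rfl x hx⟩
    have hFY : ∀ (u : StrongDual ℝ X) (x : X), h x ≠ ⊤ → u x - (h x).toReal ≤ Hs u :=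
      fun u x hx => le_csSup (hSbdd u) ⟨x, hx, rfl⟩
    have hSle : ∀ (u : StrongDual ℝ X) (B : ℝ), (∀ x, h x ≠ ⊤ → u x - (h x).toReal ≤ B) → Hs u ≤ B :=
      fun u B hB => csSup_le (hSne u) (by rintro r ⟨x, hx, rfl⟩; exact hB x hx)
    have hSapprox : ∀ (u : StrongDual ℝ X) (η : ℝ), 0 < η →
        ∃ x, h x ≠ ⊤ ∧ Hs u - η < u x - (h x).toReal := by
      intro u η hη
      obtain ⟨r, ⟨x, hx, rfl⟩, hr⟩ := exists_lt_of_lt_csSup (hSne u)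
        (show Hs u - η < Hs u by linarith)
      exact ⟨x, hx, hr⟩
    clear_value Hs
    clear hHsdef hSne hSbdd
    have hmono4 : ∀ (x y : X) (mx ys : StrongDual ℝ X), mx ∈ M x → ys ∈ M y →
        mx y + ys x - ys y ≤ mx x := by
      intro x y mx ys hmx hys
      have := hM x y mx ys hmx hys
      simp only [ContinuousLinearMap.sub_apply, map_sub] at this
      linarith
    have hDcomb : ∀ (u₁ u₂ : X) (s₁ s₂ : ℝ), 0 ≤ s₁ → 0 ≤ s₂ → s₁ + s₂ = 1 →
        h u₁ ≠ ⊤ → h u₂ ≠ ⊤ → h (s₁ • u₁ + s₂ • u₂) ≠ ⊤ ∧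
        (h (s₁ • u₁ + s₂ • u₂)).toReal ≤ s₁ * (h u₁).toReal + s₂ * (h u₂).toReal := by
      intro u₁ u₂ s₁ s₂ hs₁ hs₂ hs hu₁ hu₂
      have hc := hconv u₁ u₂ s₁ s₂ hs₁ hs₂ hs
      rw [hre u₁ hu₁, hre u₂ hu₂] at hc
      simp only [EReal.toReal_coe, ← EReal.coe_mul, ← EReal.coe_add] at hc
      have htop : h (s₁ • u₁ + s₂ • u₂) ≠ ⊤ := (lt_of_le_of_lt hc (EReal.coe_lt_top _)).ne
      refine ⟨htop, ?_⟩
      rw [hre _ htop] at hc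
      exact_mod_cast hc
    -- radius and upper bound for the feasible set
    set r₀ : ℝ := min ε 1 with hr₀def
    have hr₀pos : 0 < r₀ := lt_min hε one_pos
    obtain ⟨CH, hCH⟩ := hboundρ (‖xs‖ + ‖m₀‖ + r₀) (by positivity)
    set Cp : ℝ := max 0 (m₀ z + Cb + CH + ‖xs‖ * (‖z‖ + r₀)) with hCpdef
    have hCpnn : 0 ≤ Cp := le_max_left _ _
    have hupper : ∀ (a : X) (b : StrongDual ℝ X), ‖a‖ < r₀ → ‖b‖ < r₀ →
        h (z + a) ≠ ⊤ ∧ ∀ y ys, ys ∈ M y →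
          m₀ y + ys z - ys y + (h (z + a)).toReal + Hs (xs - m₀ - b) - xs (z + a) ≤ Cp := by
      intro a b ha hb
      have hdist : dist (z + a) z < ε := by
        rw [dist_eq_norm, add_sub_cancel_left]
        exact lt_of_lt_of_le ha (min_le_left _ _)
      obtain ⟨htop, hval⟩ := hCbR (z + a) hdist
      refine ⟨htop, fun y ys hys => ?_⟩
      have h1 : m₀ y + ys z - ys y ≤ m₀ z := hmono4 z y m₀ ys hm₀ hys
      have h2 : Hs (xs - m₀ - b) ≤ CH := by
        apply hSle
        intro x hx
        apply hCH _ ?_ x hx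
        calc ‖xs - m₀ - b‖ ≤ ‖xs - m₀‖ + ‖b‖ := norm_sub_le _ _
          _ ≤ (‖xs‖ + ‖m₀‖) + r₀ := by
              have := norm_sub_le xs m₀
              linarith [hb.le]
      have h3 : -(‖xs‖ * (‖z‖ + r₀)) ≤ xs (z + a) := by
        have ha' : |xs (z + a)| ≤ ‖xs‖ * ‖z + a‖ := by
          rw [← Real.norm_eq_abs]; exact xs.le_opNorm _
        have hz' : ‖z + a‖ ≤ ‖z‖ + r₀ := by
          have := norm_add_le z a
          linarith [ha.le]
        have := (abs_le.1 ha').1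
        nlinarith [norm_nonneg xs]
      refine le_trans ?_ (le_max_right _ _)
      linarith
    clear_value r₀ Cp
    clear hr₀def hCpdef hCH
    -- convex combinations of feasible points are feasible
    have hrawcomb : ∀ (x₁ x₂ a₁ a₂ : X) (m₁ m₂ b₁ b₂ : StrongDual ℝ X) (t₁ t₂ s₁ s₂ : ℝ),
        0 ≤ s₁ → 0 ≤ s₂ → s₁ + s₂ = 1 →
        h (x₁ + a₁) ≠ ⊤ → h (x₂ + a₂) ≠ ⊤ →
        (∀ y ys, ys ∈ M y → m₁ y + ys x₁ - ys y + (h (x₁ + a₁)).toReal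
          + Hs (xs - m₁ - b₁) - xs (x₁ + a₁) ≤ t₁) →
        (∀ y ys, ys ∈ M y → m₂ y + ys x₂ - ys y + (h (x₂ + a₂)).toReal
          + Hs (xs - m₂ - b₂) - xs (x₂ + a₂) ≤ t₂) →
        h ((s₁ • x₁ + s₂ • x₂) + (s₁ • a₁ + s₂ • a₂)) ≠ ⊤ ∧
        (∀ y ys, ys ∈ M y → (s₁ • m₁ + s₂ • m₂) y + ys (s₁ • x₁ + s₂ • x₂) - ys y
          + (h ((s₁ • x₁ + s₂ • x₂) + (s₁ • a₁ + s₂ • a₂))).toReal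
          + Hs (xs - (s₁ • m₁ + s₂ • m₂) - (s₁ • b₁ + s₂ • b₂))
          - xs ((s₁ • x₁ + s₂ • x₂) + (s₁ • a₁ + s₂ • a₂))
          ≤ s₁ * t₁ + s₂ * t₂) := by
      intro x₁ x₂ a₁ a₂ m₁ m₂ b₁ b₂ t₁ t₂ s₁ s₂ hs₁ hs₂ hs hx₁ hx₂ hf₁ hf₂
      have hptd : (s₁ • x₁ + s₂ • x₂) + (s₁ • a₁ + s₂ • a₂)
          = s₁ • (x₁ + a₁) + s₂ • (x₂ + a₂) := by module
      rw [hptd]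
      obtain ⟨htop, hhr⟩ := hDcomb (x₁ + a₁) (x₂ + a₂) s₁ s₂ hs₁ hs₂ hs hx₁ hx₂
      refine ⟨htop, fun y ys hys => ?_⟩
      have hHsd : xs - (s₁ • m₁ + s₂ • m₂) - (s₁ • b₁ + s₂ • b₂)
          = s₁ • (xs - m₁ - b₁) + s₂ • (xs - m₂ - b₂) := by
        have hxs : xs = s₁ • xs + s₂ • xs := by
          rw [← add_smul, hs, one_smul]
        conv_lhs => rw [hxs]
        module
      have hHsle : Hs (xs - (s₁ • m₁ + s₂ • m₂) - (s₁ • b₁ + s₂ • b₂))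
          ≤ s₁ * Hs (xs - m₁ - b₁) + s₂ * Hs (xs - m₂ - b₂) := by
        rw [hHsd]
        apply hSle
        intro x hx
        have e : (s₁ • (xs - m₁ - b₁) + s₂ • (xs - m₂ - b₂)) x - (h x).toReal
            = s₁ * ((xs - m₁ - b₁) x - (h x).toReal) + s₂ * ((xs - m₂ - b₂) x - (h x).toReal) := by
          simp only [ContinuousLinearMap.add_apply, ContinuousLinearMap.smul_apply, smul_eq_mul]
          linear_combination ((h x).toReal) * hs
        rw [e]
        have e1 := mul_le_mul_of_nonneg_left (hFY (xs - m₁ - b₁) x hx) hs₁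
        have e2 := mul_le_mul_of_nonneg_left (hFY (xs - m₂ - b₂) x hx) hs₂
        linarith
      have hl1 := mul_le_mul_of_nonneg_left (hf₁ y ys hys) hs₁
      have hl2 := mul_le_mul_of_nonneg_left (hf₂ y ys hys) hs₂
      have eys : ys (s₁ • x₁ + s₂ • x₂) = s₁ * ys x₁ + s₂ * ys x₂ := by
        rw [map_add, map_smul, map_smul]; simp [smul_eq_mul]
      have exs : xs (s₁ • (x₁ + a₁) + s₂ • (x₂ + a₂)) = s₁ * xs (x₁ + a₁) + s₂ * xs (x₂ + a₂) := by
        rw [map_add, map_smul, map_smul]; simp [smul_eq_mul]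
      have em : (s₁ • m₁ + s₂ • m₂) y = s₁ * m₁ y + s₂ * m₂ y := by
        simp [ContinuousLinearMap.add_apply, ContinuousLinearMap.smul_apply, smul_eq_mul]
      have eyy : ys y = s₁ * ys y + s₂ * ys y := by
        have : (s₁ + s₂) * ys y = ys y := by rw [hs, one_mul]
        linarith [this]
      rw [em, eys, exs]
      linarith
    -- the epigraph-type set
    set EE : Set ((X × StrongDual ℝ X) × ℝ) := {w | -1 ≤ w.2 ∧ ∃ t' ≤ w.2, ∃ x m,
      h (x + w.1.1) ≠ ⊤ ∧ ∀ y ys, ys ∈ M y →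
        m y + ys x - ys y + (h (x + w.1.1)).toReal + Hs (xs - m - w.1.2) - xs (x + w.1.1) ≤ t'}
      with hEEdef
    have hEEconv : Convex ℝ EE := by
      intro p hp q hq s₁ s₂ hs₁ hs₂ hs
      obtain ⟨⟨a₁, b₁⟩, T₁⟩ := p
      obtain ⟨⟨a₂, b₂⟩, T₂⟩ := q
      rw [hEEdef] at hp hq ⊢
      simp only [mem_setOf_eq] at hp hq ⊢
      obtain ⟨h1, t₁, ht₁, x₁, m₁, hx₁, hf₁⟩ := hp
      obtain ⟨h2, t₂, ht₂, x₂, m₂, hx₂, hf₂⟩ := hq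
      obtain ⟨htop, hfeas⟩ := hrawcomb x₁ x₂ a₁ a₂ m₁ m₂ b₁ b₂ t₁ t₂ s₁ s₂ hs₁ hs₂ hs hx₁ hx₂ hf₁ hf₂
      simp only [Prod.smul_mk, Prod.mk_add_mk, smul_eq_mul]
      refine ⟨?_, s₁ * t₁ + s₂ * t₂, ?_, s₁ • x₁ + s₂ • x₂, s₁ • m₁ + s₂ • m₂, htop, hfeas⟩
      · nlinarith [mul_le_mul_of_nonneg_left h1 hs₁, mul_le_mul_of_nonneg_left h2 hs₂]
      · have e1 := mul_le_mul_of_nonneg_left ht₁ hs₁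
        have e2 := mul_le_mul_of_nonneg_left ht₂ hs₂
        linarith
    -- any feasible value at the origin is nonnegative (by maximality)
    have hzero : ∀ (x : X) (m : StrongDual ℝ X) (t : ℝ), h x ≠ ⊤ →
        (∀ y ys, ys ∈ M y → m y + ys x - ys y + (h x).toReal + Hs (xs - m) - xs x ≤ t) →
        0 ≤ t := by
      intro x m t hx hfeas
      by_contra hneg
      push_neg at hneg
      have hFYx : xs x - m x - (h x).toReal ≤ Hs (xs - m) := by
        have := hFY (xs - m) x hx
        simpa [ContinuousLinearMap.sub_apply] using this
      have hmem : m ∈ M x := by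
        apply hMm.2
        intro y ys hys
        have h1 := hfeas y ys hys
        simp only [ContinuousLinearMap.sub_apply, map_sub]
        nlinarith
      have h2 := hfeas x m hmem
      nlinarith
    -- the optimal value at the origin
    set T0 : Set ℝ := {t | ∃ x m, h x ≠ ⊤ ∧ ∀ y ys, ys ∈ M y →
      m y + ys x - ys y + (h x).toReal + Hs (xs - m) - xs x ≤ t} with hT0def
    have hT0mem : Cp ∈ T0 := by
      obtain ⟨htop, hfeas⟩ := hupper 0 0 (by simpa using hr₀pos) (by simpa using hr₀pos)
      rw [add_zero] at htop hfeas
      refine ⟨z, m₀, htop, fun y ys hys => ?_⟩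
      have := hfeas y ys hys
      rw [sub_zero] at this
      exact this
    have hT0ne : T0.Nonempty := ⟨Cp, hT0mem⟩
    have hT0lb : ∀ t ∈ T0, (0:ℝ) ≤ t := by
      rintro t ⟨x, m, hx, hfeas⟩
      exact hzero x m t hx hfeas
    set p0 : ℝ := sInf T0 with hp0def
    have hp0nn : 0 ≤ p0 := le_csInf hT0ne hT0lb
    have hp0le : p0 ≤ Cp := csInf_le ⟨0, hT0lb⟩ hT0mem
    have hp0approx : ∀ η : ℝ, 0 < η → ∃ t, t < p0 + η ∧ ∃ x m, h x ≠ ⊤ ∧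
        ∀ y ys, ys ∈ M y → m y + ys x - ys y + (h x).toReal + Hs (xs - m) - xs x ≤ t := by
      intro η hη
      obtain ⟨t, htT, hlt⟩ := exists_lt_of_csInf_lt hT0ne
        (show sInf T0 < p0 + η by rw [← hp0def]; linarith)
      rw [hT0def] at htT
      obtain ⟨x, m, hx, hfeas⟩ := htT
      exact ⟨t, hlt, x, m, hx, hfeas⟩
    -- vertical ray above Cp is interior to EE
    have hray : ∀ T : ℝ, Cp < T → (((0 : X), (0 : StrongDual ℝ X)), T) ∈ interior EE := by
      intro T hT
      rw [mem_interior]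
      refine ⟨Metric.ball (((0 : X), (0 : StrongDual ℝ X)), T) (min r₀ (T - Cp)), ?_,
        Metric.isOpen_ball, Metric.mem_ball_self (lt_min hr₀pos (by linarith))⟩
      rintro ⟨⟨a, b⟩, t⟩ hw
      rw [Metric.mem_ball, Prod.dist_eq, Prod.dist_eq] at hw
      simp only [max_lt_iff] at hw
      obtain ⟨⟨ha, hb⟩, ht⟩ := hw
      rw [dist_eq_norm, sub_zero] at ha hb
      have ht' : |t - T| < T - Cp := by
        rw [Real.dist_eq] at ht
        exact lt_of_lt_of_le ht (min_le_right _ _)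
      have htCp : Cp < t := by
        have := (abs_lt.1 ht').1
        linarith
      have ha' : ‖a‖ < r₀ := lt_of_lt_of_le ha (min_le_left _ _)
      have hb' : ‖b‖ < r₀ := lt_of_lt_of_le hb (min_le_left _ _)
      obtain ⟨htop, hfeas⟩ := hupper a b ha' hb'
      rw [hEEdef]
      exact ⟨by simp only; linarith, Cp, htCp.le, z, m₀, htop, hfeas⟩
    -- the point ((0,0),p0) is not interior to EE
    have hP₀ : (((0 : X), (0 : StrongDual ℝ X)), p0) ∉ interior EE := by
      intro hmem
      rw [mem_interior_iff_mem_nhds, Metric.mem_nhds_iff] at hmem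
      obtain ⟨r, hr, hsub⟩ := hmem
      have hin : (((0 : X), (0 : StrongDual ℝ X)), p0 - r / 2) ∈ EE := by
        apply hsub
        rw [Metric.mem_ball, Prod.dist_eq, Prod.dist_eq]
        simp only [dist_self, Real.dist_eq, max_lt_iff]
        constructor
        · constructor <;> simpa using hr
        · rw [abs_of_nonpos (by linarith)]
          linarith
      rw [hEEdef] at hin
      obtain ⟨-, t', ht', x, m, htop, hfeas⟩ := hin
      have htT0 : t' ∈ T0 := by
        refine ⟨x, m, ?_, ?_⟩
        · simpa using htop
        · intro y ys hys
          have := hfeas y ys hys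
          simpa using this
      have := csInf_le ⟨0, hT0lb⟩ htT0
      simp only at ht'
      rw [← hp0def] at this
      linarith
    clear_value T0 p0
    clear hT0def hp0def hT0mem hT0ne hT0lb hzero
    -- separating functional
    obtain ⟨f, hf⟩ := geometric_hahn_banach_open_point (hEEconv.interior) isOpen_interior hP₀
    -- decompose the separating functional
    set fa : X →L[ℝ] ℝ := f.comp ((ContinuousLinearMap.inl ℝ (X × StrongDual ℝ X) ℝ).comp
      (ContinuousLinearMap.inl ℝ X (StrongDual ℝ X))) with hfadef
    set fb : (StrongDual ℝ X) →L[ℝ] ℝ := f.comp ((ContinuousLinearMap.inl ℝ (X × StrongDual ℝ X) ℝ).comp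
      (ContinuousLinearMap.inr ℝ X (StrongDual ℝ X))) with hfbdef
    set c : ℝ := f (((0 : X), (0 : StrongDual ℝ X)), (1:ℝ)) with hcdef
    have hfdecomp : ∀ (a : X) (b : StrongDual ℝ X) (t : ℝ), f ((a, b), t) = fa a + fb b + t * c := by
      intro a b t
      have e : ((a, b), t) = (((a, (0 : StrongDual ℝ X)), (0:ℝ))) + (((0:X), b), (0:ℝ))
          + t • (((0:X), (0 : StrongDual ℝ X)), (1:ℝ)) := by
        simp [Prod.ext_iff]
      rw [e, map_add, map_add, map_smul]
      simp only [hfadef, hfbdef, hcdef, ContinuousLinearMap.comp_apply,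
        ContinuousLinearMap.inl_apply, ContinuousLinearMap.inr_apply, smul_eq_mul]
      try ring
    have hkey0 := hf _ (hray (Cp + 1) (by linarith))
    rw [hfdecomp, hfdecomp] at hkey0
    simp only [map_zero] at hkey0
    have hcneg : c < 0 := by
      rcases lt_trichotomy c 0 with h' | h' | h'
      · exact h'
      · exfalso; rw [h'] at hkey0; simp at hkey0
      · exfalso; nlinarith [hp0le]
    set d : ℝ := (-c)⁻¹ with hddef
    have hd : 0 < d := by rw [hddef]; exact inv_pos.2 (neg_pos.2 hcneg)
    have hdc : d * c = -1 := by
      rw [hddef]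
      field_simp
      rw [div_self hcneg.ne]
    clear_value fa fb c d
    clear hfadef hfbdef hcdef hddef hkey0 hcneg
    obtain ⟨q, hq⟩ := hX (d • fb)
    have hbq : ∀ b : StrongDual ℝ X, d * fb b = b q := by
      intro b
      have := DFunLike.congr_fun hq b
      simpa [NormedSpace.dual_def, ContinuousLinearMap.smul_apply, smul_eq_mul] using this.symm
    have hsep : ∀ (a : X) (b : StrongDual ℝ X) (t : ℝ), (((a, b)), t) ∈ interior EE →
        p0 + d * fa a + b q < t := by
      intro a b t hmem
      have h1 := hf _ hmem
      rw [hfdecomp, hfdecomp] at h1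
      simp only [map_zero] at h1
      have h2 := mul_lt_mul_of_pos_left h1 hd
      have e1 : d * (fa a + fb b + t * c) = d * fa a + d * fb b + t * (d * c) := by ring
      have e2 : d * (0 + 0 + p0 * c) = p0 * (d * c) := by ring
      rw [e1, e2, hdc] at h2
      have h3 := hbq b
      linarith
    clear hf hfdecomp hdc hbq hq
    clear f
    have hlocal : ∀ (a : X) (b : StrongDual ℝ X) (t : ℝ) (x : X) (m : StrongDual ℝ X),
        ‖a‖ < r₀ / 2 → ‖b‖ < r₀ / 2 → h (x + a) ≠ ⊤ →
        (∀ y ys, ys ∈ M y → m y + ys x - ys y + (h (x + a)).toReal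
          + Hs (xs - m - b) - xs (x + a) ≤ t) →
        p0 + d * fa a + b q ≤ max t (-1) := by
      intro a b t x m ha hb htop hfeas
      set t' := max t (-1) with ht'def
      have ht'm1 : -1 ≤ t' := le_max_right _ _
      have htt' : t ≤ t' := le_max_left _ _
      have hpt : ∀ lam : ℝ, 0 < lam → (((a, b)), t' + lam) ∈ interior EE := by
        intro lam hlam
        set s : ℝ := min (lam / (2 * (Cp + 1))) 1 with hsdef
        have hs0 : 0 < s := lt_min (by positivity) one_pos
        have hs1 : s ≤ 1 := min_le_right _ _
        have hsCp : s * (Cp + 1) ≤ lam / 2 := by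
          have h1 : s ≤ lam / (2 * (Cp + 1)) := min_le_left _ _
          rw [le_div_iff₀ (by positivity)] at h1
          linarith
        set ρ : ℝ := min (s * (r₀ / 2)) (lam / 2) with hρdef
        have hρ0 : 0 < ρ := lt_min (by positivity) (by positivity)
        rw [mem_interior]
        refine ⟨Metric.ball ((a, b), t' + lam) ρ, ?_, Metric.isOpen_ball,
          Metric.mem_ball_self hρ0⟩
        rintro ⟨⟨a', b'⟩, t''⟩ hw
        rw [Metric.mem_ball, Prod.dist_eq, Prod.dist_eq] at hw
        simp only [max_lt_iff] at hw
        obtain ⟨⟨hwa, hwb⟩, hwt⟩ := hw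
        rw [dist_eq_norm] at hwa hwb
        rw [Real.dist_eq] at hwt
        set a₃ : X := a + s⁻¹ • (a' - a) with ha₃def
        set b₃ : StrongDual ℝ X := b + s⁻¹ • (b' - b) with hb₃def
        have hinvρ : s⁻¹ * ρ ≤ r₀ / 2 := by
          have h3 : ρ ≤ s * (r₀ / 2) := min_le_left _ _
          calc s⁻¹ * ρ ≤ s⁻¹ * (s * (r₀ / 2)) := mul_le_mul_of_nonneg_left h3 (inv_pos.2 hs0).le
            _ = r₀ / 2 := by field_simp
        have ha₃ : ‖a₃‖ < r₀ := by
          have h1 : ‖s⁻¹ • (a' - a)‖ ≤ s⁻¹ * ρ := by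
            rw [norm_smul, Real.norm_eq_abs, abs_of_nonneg (inv_pos.2 hs0).le]
            exact mul_le_mul_of_nonneg_left hwa.le (inv_pos.2 hs0).le
          calc ‖a₃‖ ≤ ‖a‖ + ‖s⁻¹ • (a' - a)‖ := norm_add_le _ _
            _ < r₀ / 2 + r₀ / 2 := by linarith
            _ = r₀ := by ring
        have hb₃ : ‖b₃‖ < r₀ := by
          have h1 : ‖s⁻¹ • (b' - b)‖ ≤ s⁻¹ * ρ := by
            rw [norm_smul, Real.norm_eq_abs, abs_of_nonneg (inv_pos.2 hs0).le]
            exact mul_le_mul_of_nonneg_left hwb.le (inv_pos.2 hs0).le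
          calc ‖b₃‖ ≤ ‖b‖ + ‖s⁻¹ • (b' - b)‖ := norm_add_le _ _
            _ < r₀ / 2 + r₀ / 2 := by linarith
            _ = r₀ := by ring
        obtain ⟨htop₃, hfeas₃⟩ := hupper a₃ b₃ ha₃ hb₃
        have hcomb := hrawcomb x z a a₃ m m₀ b b₃ t Cp (1 - s) s (by linarith) hs0.le
          (by ring) htop htop₃ hfeas hfeas₃
        have ea : (1 - s) • a + s • a₃ = a' := by
          rw [ha₃def, smul_add, smul_smul, mul_inv_cancel₀ hs0.ne', one_smul]
          module
        have eb : (1 - s) • b + s • b₃ = b' := by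
          rw [hb₃def, smul_add, smul_smul, mul_inv_cancel₀ hs0.ne', one_smul]
          module
        rw [ea, eb] at hcomb
        obtain ⟨htop', hfeas'⟩ := hcomb
        have h1 : t' + lam - ρ < t'' := by linarith [(abs_lt.1 hwt).1]
        have h2 : ρ ≤ lam / 2 := min_le_right _ _
        have hval : (1 - s) * t + s * Cp ≤ t'' := by
          have h3 : (1 - s) * t + s * Cp ≤ t' + s * (Cp - t') := by nlinarith
          have h4 : s * (Cp - t') ≤ s * (Cp + 1) := by nlinarith
          linarith
        rw [hEEdef]
        refine ⟨?_, (1 - s) * t + s * Cp, hval, (1 - s) • x + s • z,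
          (1 - s) • m + s • m₀, htop', hfeas'⟩
        simp only
        linarith
      by_contra hgt
      push_neg at hgt
      have hlam := hsep a b (t' + (p0 + d * fa a + b q - t') / 2) (hpt _ (by linarith))
      linarith
    have hglobal : ∀ (a : X) (b : StrongDual ℝ X) (t : ℝ) (x : X) (m : StrongDual ℝ X),
        h (x + a) ≠ ⊤ →
        (∀ y ys, ys ∈ M y → m y + ys x - ys y + (h (x + a)).toReal
          + Hs (xs - m - b) - xs (x + a) ≤ t) →
        p0 + d * fa a + b q ≤ t := by
      intro a b t x m htop hfeas
      set G := d * fa a + b q with hGdef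
      set s : ℝ := min (min (r₀ / (2 * (‖a‖ + 1))) (r₀ / (2 * (‖b‖ + 1))))
        (min 1 ((p0 + 1) / (|G| + 1))) with hsdef
      have hs0 : 0 < s := by
        apply lt_min (lt_min (by positivity) (by positivity)) (lt_min one_pos (by positivity))
      have hs1 : s ≤ 1 := le_trans (min_le_right _ _) (min_le_left _ _)
      have hsa : s * ‖a‖ < r₀ / 2 := by
        have h1 : s ≤ r₀ / (2 * (‖a‖ + 1)) := le_trans (min_le_left _ _) (min_le_left _ _)
        rw [le_div_iff₀ (by positivity)] at h1
        nlinarith [norm_nonneg a]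
      have hsb : s * ‖b‖ < r₀ / 2 := by
        have h1 : s ≤ r₀ / (2 * (‖b‖ + 1)) := le_trans (min_le_left _ _) (min_le_right _ _)
        rw [le_div_iff₀ (by positivity)] at h1
        nlinarith [norm_nonneg b]
      have hsG : s * |G| < p0 + 1 := by
        have h1 : s ≤ (p0 + 1) / (|G| + 1) := le_trans (min_le_right _ _) (min_le_right _ _)
        rw [le_div_iff₀ (by positivity)] at h1
        nlinarith [abs_nonneg G]
      by_contra hgt
      push_neg at hgt
      set η : ℝ := s * (p0 + G - t) / 2 with hηdef
      have hη : 0 < η := by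
        rw [hηdef]
        apply div_pos (mul_pos hs0 (by linarith)) two_pos
      obtain ⟨t₀, ht₀, x₀, n₀, hx₀top, hfeas₀⟩ := hp0approx η hη
      have hx₀top' : h (x₀ + 0) ≠ ⊤ := by rwa [add_zero]
      have hfeas₀' : ∀ y ys, ys ∈ M y → n₀ y + ys x₀ - ys y + (h (x₀ + 0)).toReal
          + Hs (xs - n₀ - 0) - xs (x₀ + 0) ≤ t₀ := by
        intro y ys hys
        rw [add_zero, sub_zero]
        exact hfeas₀ y ys hys
      have hcomb := hrawcomb x x₀ a 0 m n₀ b 0 t t₀ s (1 - s) hs0.le (by linarith) (by ring)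
        htop hx₀top' hfeas hfeas₀'
      rw [smul_zero, add_zero, smul_zero, add_zero] at hcomb
      obtain ⟨htop', hfeas'⟩ := hcomb
      have hna : ‖s • a‖ < r₀ / 2 := by
        rw [norm_smul, Real.norm_eq_abs, abs_of_nonneg hs0.le]; exact hsa
      have hnb : ‖s • b‖ < r₀ / 2 := by
        rw [norm_smul, Real.norm_eq_abs, abs_of_nonneg hs0.le]; exact hsb
      have hloc := hlocal (s • a) (s • b) (s * t + (1 - s) * t₀) (s • x + (1 - s) • x₀)
        (s • m + (1 - s) • n₀) hna hnb htop' hfeas'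
      have e : d * fa (s • a) + (s • b) q = s * G := by
        rw [map_smul, ContinuousLinearMap.smul_apply, smul_eq_mul, smul_eq_mul, hGdef]
        ring
      have hloc2 : p0 + s * G ≤ max (s * t + (1 - s) * t₀) (-1) := by linarith [hloc, e]
      have hlow : -1 < p0 + s * G := by
        nlinarith [neg_abs_le G, hp0nn, hs0.le, hsG, mul_le_mul_of_nonneg_left (neg_abs_le G) hs0.le]
      rcases le_or_gt (s * t + (1 - s) * t₀) (-1) with hmx | hmx
      · rw [max_eq_right hmx] at hloc2
        linarith
      · rw [max_eq_left hmx.le] at hloc2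
        have h5 : (1 - s) * t₀ ≤ (1 - s) * p0 + (1 - s) * η := by
          nlinarith [mul_le_mul_of_nonneg_left ht₀.le (by linarith : (0:ℝ) ≤ 1 - s)]
        have h6 : (1 - s) * η ≤ η := by nlinarith [mul_nonneg hs0.le hη.le]
        have h7 : s * p0 + s * G ≤ s * t + η := by linarith
        rw [hηdef] at h7
        nlinarith [mul_pos hs0 (by linarith : (0:ℝ) < p0 + G - t)]
    -- the dual inequality along graph points
    have hstar : ∀ (x : X) (m : StrongDual ℝ X), m ∈ M x → ∀ (u : X), h u ≠ ⊤ → ∀ v : StrongDual ℝ X,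
        p0 + d * fa (u - x) + (xs - m - v) q ≤ m x + (h u).toReal + Hs v - xs u := by
      intro x m hm u hu v
      have e1 : x + (u - x) = u := by abel
      have e2 : xs - m - (xs - m - v) = v := by abel
      have htop : h (x + (u - x)) ≠ ⊤ := by rw [e1]; exact hu
      have hfeas : ∀ y ys, ys ∈ M y → m y + ys x - ys y + (h (x + (u - x))).toReal
          + Hs (xs - m - (xs - m - v)) - xs (x + (u - x)) ≤ m x + (h u).toReal + Hs v - xs u := by
        intro y ys hys
        rw [e1, e2]
        linarith [hmono4 x y m ys hm hys]
      exact hglobal (u - x) (xs - m - v) _ x m htop hfeas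
    set qs : StrongDual ℝ X := d • fa with hqsdef
    have hqs : ∀ a : X, qs a = d * fa a := by
      intro a
      simp [hqsdef, ContinuousLinearMap.smul_apply, smul_eq_mul]
    -- maximal monotonicity gives -qs ∈ M (-q)
    have hMq : -qs ∈ M (-q) := by
      apply hMm.2
      intro y ys hys
      have hkey2 : (0:ℝ) ≤ ys y + qs y + ys q + qs q := by
        have key : ∀ η : ℝ, 0 < η → p0 - η ≤ ys y + qs y + ys q + qs q := by
          intro η hη
          obtain ⟨u, hu, huApp⟩ := hSapprox (xs + qs) η hη
          have h1 := hstar y ys hys u hu (xs + qs)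
          have e1 : d * fa (u - y) = qs u - qs y := by
            rw [map_sub, hqs u, hqs y]
            ring
          have e2 : (xs - ys - (xs + qs)) q = -(ys q) - qs q := by
            simp only [ContinuousLinearMap.sub_apply, ContinuousLinearMap.add_apply]
            ring
          have e3 : (xs + qs) u = xs u + qs u := by
            simp [ContinuousLinearMap.add_apply]
          rw [e1, e2] at h1
          rw [e3] at huApp
          linarith
        by_contra hneg
        push_neg at hneg
        have := key ((p0 - (ys y + qs y + ys q + qs q)) / 2) (by linarith)
        linarith
      simp only [ContinuousLinearMap.sub_apply, ContinuousLinearMap.neg_apply, map_sub, map_neg]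
      linarith
    -- the club inequality
    have hclub : ∀ v : StrongDual ℝ X, p0 + (xs q + qs q) + Hs (xs + qs) ≤ Hs v + v q := by
      intro v
      have key : ∀ η : ℝ, 0 < η → p0 + (xs q + qs q) + Hs (xs + qs) - η ≤ Hs v + v q := by
        intro η hη
        obtain ⟨u, hu, huApp⟩ := hSapprox (xs + qs) η hη
        have h1 := hstar (-q) (-qs) hMq u hu v
        have e1 : d * fa (u - -q) = qs u + qs q := by
          rw [map_sub, map_neg, hqs u, hqs q]
          ring
        have e2 : (xs - -qs - v) q = xs q + qs q - v q := by
          simp only [ContinuousLinearMap.sub_apply, ContinuousLinearMap.neg_apply]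
          ring
        have e3 : (-qs) (-q) = qs q := by
          simp
        have e4 : (xs + qs) u = xs u + qs u := by
          simp [ContinuousLinearMap.add_apply]
        rw [e1, e2, e3] at h1
        rw [e4] at huApp
        linarith
      by_contra hneg
      push_neg at hneg
      have := key ((p0 + (xs q + qs q) + Hs (xs + qs) - (Hs v + v q)) / 2) (by linarith)
      linarith
    -- Fenchel–Moreau at the point -q
    have hg₀' : ∀ x, h x ≠ ⊤ → (h z).toReal + (gradh z) (x - z) ≤ (h x).toReal := by
      intro x hx
      linarith [hgsub z hzS x hx]
    have hfm : h (-q) ≤ ((-(p0 + (xs q + qs q) + Hs (xs + qs)) : ℝ) : EReal) := by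
      apply fm_point h hbot hlsc hconv z hzD (gradh z) hg₀' (-q)
      intro v B hB
      have h1 : Hs v ≤ B := hSle v B hB
      have h2 := hclub v
      have e : v (-q) = - v q := by rw [map_neg]
      rw [e]
      linarith
    have hqtop : h (-q) ≠ ⊤ := (lt_of_le_of_lt hfm (EReal.coe_lt_top _)).ne
    have hqR : (h (-q)).toReal ≤ -(p0 + (xs q + qs q) + Hs (xs + qs)) := by
      rw [hre _ hqtop] at hfm
      exact_mod_cast hfm
    -- subdifferential membership
    have hsub : (xs + qs) ∈ subdiff h (-q) := by
      intro y
      rcases eq_or_ne (h y) ⊤ with hy | hy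
      · rw [hy]; exact le_top
      · rw [hre y hy, hre _ hqtop, ← EReal.coe_add, EReal.coe_le_coe_iff]
        have h1 := hFY (xs + qs) y hy
        have e1 : (xs + qs) (y - -q) = (xs + qs) y + (xs q + qs q) := by
          rw [map_sub, map_neg]
          simp only [ContinuousLinearMap.add_apply]
          ring
        rw [e1]
        have e2 : (xs + qs) y = xs y + qs y := by simp [ContinuousLinearMap.add_apply]
        rw [e2] at h1 ⊢
        linarith
    have hqS : -q ∈ interior {y | h y ≠ ⊤} := (hdom (-q)).1 ⟨xs + qs, hsub⟩
    have hgradq : xs + qs = gradh (-q) := by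
      have hg := hgrad (-q) hqS
      rw [hg] at hsub
      exact hsub
    refine ⟨-q, hqS, -qs, hMq, ?_⟩
    rw [← hgradq]
    abel
end
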